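/- If X is a locally two-distance set in ℝ^d with |X| ≥ 4 and Y ⊆ X is a saturated subset with dim(span of Y translated to origin) = d, then X \ Y contains at most one point, and X is a two-distance set. -/

import Mathlib

open scoped Classical

/-- `A_X(x)`: the set of distances from `x` to the other points of `X`. -/
noncomputable def distancesFrom {d : ℕ} (X : Finset (EuclideanSpace ℝ (Fin d)))
    (x : EuclideanSpace ℝ (Fin d)) : Finset ℝ :=
  (X.erase x).image (fun y => dist x y)

/-- `A(X)`: the set of distances between distinct points of `X`. -/
noncomputable def distSet {d : ℕ} (X : Finset (EuclideanSpace ℝ (Fin d))) : Finset ℝ :=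
  X.offDiag.image (fun p => dist p.1 p.2)

/-- `Y` is a saturated subset of `X`: `|Y| ≥ 2` and `Y` is maximal among subsets of `X` with
the property that, for some distinct positive reals `α, β`, every `y ∈ Y` has
`A_X(y) = {α, β}`. -/
def IsSaturated {d : ℕ} (X Y : Finset (EuclideanSpace ℝ (Fin d))) : Prop :=
  Y ⊆ X ∧ 2 ≤ Y.card ∧
    (∃ α β : ℝ, 0 < α ∧ 0 < β ∧ α ≠ β ∧ ∀ y ∈ Y, distancesFrom X y = {α, β}) ∧
    ∀ Z, Y ⊆ Z → Z ⊆ X →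
      (∃ α β : ℝ, 0 < α ∧ 0 < β ∧ α ≠ β ∧ ∀ y ∈ Z, distancesFrom X y = {α, β}) → Z = Y

/-! Maximality of `Y` forces every point of `X \ Y` to be equidistant from all points of `Y`.
Two such points differ by a vector orthogonal to the vector span of `Y`, which is everything,
so there is at most one. Every remaining pair of points then involves a point of `Y`, whose
distances are `α` or `β`. -/

theorem eq_of_forall_dist_eq_of_vectorSpan_eq_top {V P : Type*} [NormedAddCommGroup V]
    [InnerProductSpace ℝ V] [MetricSpace P] [NormedAddTorsor V P] {s : Set P}
    (hs : vectorSpan ℝ s = ⊤) {c₁ c₂ : P} (h₁ : ∀ p ∈ s, ∀ q ∈ s, dist p c₁ = dist q c₁)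
    (h₂ : ∀ p ∈ s, ∀ q ∈ s, dist p c₂ = dist q c₂) : c₁ = c₂ := by
  set v := c₂ -ᵥ c₁
  have hle : vectorSpan ℝ s ≤ (ℝ ∙ v)ᗮ := by
    refine Submodule.span_le.2 ?_
    rintro _ ⟨q, hq, p, hp, rfl⟩
    exact Submodule.mem_orthogonal_singleton_iff_inner_right.2 <|
      EuclideanGeometry.inner_vsub_vsub_of_dist_eq_of_dist_eq (h₁ p hp q hq) (h₂ p hp q hq)
  have hv : v ∈ (ℝ ∙ v)ᗮ := hle (hs ▸ Submodule.mem_top)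
  have hv0 : v = 0 := inner_self_eq_zero.1 <|
    Submodule.inner_right_of_mem_orthogonal (Submodule.mem_span_singleton_self v) hv
  exact (vsub_eq_zero_iff_eq.1 hv0).symm

section TwoDistance

variable {d : ℕ} {X Y : Finset (EuclideanSpace ℝ (Fin d))}

theorem dist_mem_distancesFrom {x y : EuclideanSpace ℝ (Fin d)} (hy : y ∈ X) (hxy : x ≠ y) :
    dist x y ∈ distancesFrom X x :=
  Finset.mem_image.2 ⟨y, Finset.mem_erase.2 ⟨hxy.symm, hy⟩, rfl⟩

/-- If `x` saw two different distances to `Y`, these would be `α` and `β`, so `x` could be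
added to `Y`, contradicting maximality. -/
theorem IsSaturated.dist_eq_of_notMem (hsat : IsSaturated X Y)
    {x : EuclideanSpace ℝ (Fin d)} (hx : x ∈ X) (hxY : x ∉ Y)
    (hloc : (distancesFrom X x).card ≤ 2) {y₁ y₂ : EuclideanSpace ℝ (Fin d)}
    (hy₁ : y₁ ∈ Y) (hy₂ : y₂ ∈ Y) : dist y₁ x = dist y₂ x := by
  obtain ⟨hYX, -, ⟨α, β, hα, hβ, hαβ, hall⟩, hmax⟩ := hsat
  by_contra hne
  have hne_x : ∀ {y}, y ∈ Y → y ≠ x := fun hy h => hxY (h ▸ hy)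
  have hmemαβ : ∀ {y}, y ∈ Y → dist y x ∈ ({α, β} : Finset ℝ) := fun hy =>
    hall _ hy ▸ dist_mem_distancesFrom hx (hne_x hy)
  have hpair : ({dist y₁ x, dist y₂ x} : Finset ℝ) = {α, β} :=
    Finset.eq_of_subset_of_card_le
      (Finset.insert_subset (hmemαβ hy₁) (Finset.singleton_subset_iff.2 (hmemαβ hy₂)))
      (by rw [Finset.card_pair hαβ, Finset.card_pair hne])
  have hsub : ({α, β} : Finset ℝ) ⊆ distancesFrom X x := by
    rw [← hpair, dist_comm y₁, dist_comm y₂]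
    exact Finset.insert_subset (dist_mem_distancesFrom (hYX hy₁) (hne_x hy₁).symm)
      (Finset.singleton_subset_iff.2 (dist_mem_distancesFrom (hYX hy₂) (hne_x hy₂).symm))
  have hxαβ : distancesFrom X x = {α, β} :=
    (Finset.eq_of_subset_of_card_le hsub (by rwa [Finset.card_pair hαβ])).symm
  have hins : insert x Y = Y :=
    hmax _ (Finset.subset_insert x Y) (Finset.insert_subset hx hYX)
      ⟨α, β, hα, hβ, hαβ, fun y hy => (Finset.mem_insert.1 hy).elim (· ▸ hxαβ) (hall y)⟩
  exact hxY (Finset.insert_eq_self.1 hins)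

theorem distSet_eq_of_card_sdiff_le_one {D : Finset ℝ} (hYX : Y ⊆ X) (hY : Y.Nonempty)
    (hD : ∀ y ∈ Y, distancesFrom X y = D) (hXY : (X \ Y).card ≤ 1) : distSet X = D := by
  ext r
  simp only [distSet, Finset.mem_image, Finset.mem_offDiag, Prod.exists]
  constructor
  · rintro ⟨p, q, ⟨hp, hq, hpq⟩, rfl⟩
    by_cases hpY : p ∈ Y
    · exact hD p hpY ▸ dist_mem_distancesFrom hq hpq
    by_cases hqY : q ∈ Y
    · exact dist_comm q p ▸ hD q hqY ▸ dist_mem_distancesFrom hp hpq.symm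
    exact absurd (Finset.card_le_one.1 hXY p (Finset.mem_sdiff.2 ⟨hp, hpY⟩) q
      (Finset.mem_sdiff.2 ⟨hq, hqY⟩)) hpq
  · intro hr
    obtain ⟨y, hy⟩ := hY
    obtain ⟨z, hz, rfl⟩ := Finset.mem_image.1 (hD y hy ▸ hr)
    obtain ⟨hzy, hzX⟩ := Finset.mem_erase.1 hz
    exact ⟨y, z, ⟨hYX hy, hzX, hzy.symm⟩, rfl⟩

end TwoDistance

theorem stmt7_general (d : ℕ) (X Y : Finset (EuclideanSpace ℝ (Fin d)))
    (hloc : ∀ x ∈ X, (distancesFrom X x).card ≤ 2)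
    (hsat : IsSaturated X Y)
    (hdim : Module.finrank ℝ (vectorSpan ℝ (Y : Set (EuclideanSpace ℝ (Fin d)))) = d) :
    (X \ Y).card ≤ 1 ∧ (distSet X).card = 2 := by
  have hspan : vectorSpan ℝ (Y : Set (EuclideanSpace ℝ (Fin d))) = ⊤ :=
    Submodule.eq_top_of_finrank_eq (by rw [hdim, finrank_euclideanSpace_fin])
  have hequi : ∀ x ∈ X \ Y, ∀ y₁ ∈ (Y : Set _), ∀ y₂ ∈ (Y : Set _), dist y₁ x = dist y₂ x :=
    fun x hx _ hy₁ _ hy₂ => let hx' := Finset.mem_sdiff.1 hx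
      hsat.dist_eq_of_notMem hx'.1 hx'.2 (hloc x hx'.1) hy₁ hy₂
  have hsdiff : (X \ Y).card ≤ 1 := Finset.card_le_one.2 fun a ha b hb =>
    eq_of_forall_dist_eq_of_vectorSpan_eq_top hspan (hequi a ha) (hequi b hb)
  obtain ⟨hYX, hY2, ⟨α, β, -, -, hαβ, hall⟩, -⟩ := hsat
  refine ⟨hsdiff, ?_⟩
  rw [distSet_eq_of_card_sdiff_le_one hYX (Finset.card_pos.1 (by omega)) hall hsdiff,
    Finset.card_pair hαβ]

/-- If `X ⊆ ℝ^d` is a locally two-distance set with at least 4 points and `Y ⊆ X` is a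
saturated subset whose (translated-to-origin) span has dimension `d`, then `X \ Y` has at
most one point and `X` is a two-distance set. -/
theorem stmt7 (d : ℕ) (X Y : Finset (EuclideanSpace ℝ (Fin d)))
    (hloc : ∀ x ∈ X, (distancesFrom X x).card ≤ 2) (hcard : 4 ≤ X.card)
    (hsat : IsSaturated X Y)
    (hdim : Module.finrank ℝ (vectorSpan ℝ (Y : Set (EuclideanSpace ℝ (Fin d)))) = d) :
    (X \ Y).card ≤ 1 ∧ (distSet X).card = 2 :=
  stmt7_general d X Y hloc hsat hdim
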